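/- In the ring of symmetric functions (equivalently, in MvPolynomial over at least n variables, or in the inverse limit), Σ_{σ ∈ S_n} p_{λ(σ)} = n! · h_n, where p_{λ(σ)} = ∏_i p_{λ_i} is the product of power sums over the cycle lengths λ(σ) = (λ_1, λ_2, …) of σ (including fixed points as cycles of length 1), and h_n is the complete homogeneous symmetric function of degree n. -/

import Mathlib

/-!
Expanding the power sums, `p_{λ(σ)}` is the sum of the monomials `x^f = ∏ᵢ x_{f i}` over the
colourings `f : Fin n → τ` that are constant on the cycles of `σ`, i.e. with `f ∘ σ = f`.
Summing over `σ` and exchanging the sums gives `∑_f |Stab f| x^f`. The monomial `x^f` only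
depends on the multiset of values of `f`, whose fibre is a single `Sₙ`-orbit, so by the
orbit–stabiliser theorem every multiset of size `n` is counted `n!` times, giving `n! hₙ`.
-/

open MvPolynomial Finset Equiv Equiv.Perm
open scoped Nat

theorem MvPolynomial.sum_prod_X_comp_eq_prod_psum {ι κ τ R : Type*} [Fintype ι] [Fintype κ]
    [DecidableEq κ] [Fintype τ] [CommSemiring R] (π : ι → κ) :
    ∑ g : κ → τ, ∏ i, (X (g (π i)) : MvPolynomial τ R) = ∏ k, psum τ R #{i | π i = k} := by
  simp only [psum, Fintype.prod_sum]
  refine sum_congr rfl fun g _ => ?_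
  rw [← prod_fiberwise univ π]
  refine prod_congr rfl fun k _ => ?_
  rw [prod_congr rfl fun i hi => by rw [(mem_filter.1 hi).2], prod_const]

namespace Equiv.Perm

theorem sameCycle_setoid_le_ker_iff {α β : Type*} [Finite α] {σ : Perm α} {f : α → β} :
    SameCycle.setoid σ ≤ Setoid.ker f ↔ f ∘ σ = f := by
  refine ⟨fun h => funext fun a => h (sameCycle_apply_left.2 SameCycle.rfl), fun h a b hab => ?_⟩
  obtain ⟨i, rfl⟩ := hab.exists_nat_pow_eq
  rw [Setoid.ker_def, coe_pow]
  exact (congrFun (Function.iterate_invariant h i) a).symm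

theorem exists_comp_eq_of_map_univ_eq {ι β : Type*} [Fintype ι] {f g : ι → β}
    (h : univ.val.map f = univ.val.map g) : ∃ π : Perm ι, g ∘ π = f := by
  classical
  have hcard (b : β) : Fintype.card {i // f i = b} = Fintype.card {i // g i = b} := by
    simpa [Multiset.count_map, Fintype.card_subtype, Finset.card, eq_comm] using
      congrArg (Multiset.count b) h
  exact ⟨ofFiberEquiv fun b => Fintype.equivOfCardEq (hcard b), funext (ofFiberEquiv_map _)⟩

theorem card_filter_comp_eq_of_comp_eq {ι β : Type*} [Fintype ι] [DecidableEq ι] [DecidableEq β]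
    {f g : ι → β} {π : Perm ι} (hπ : g ∘ π = f) :
    #{σ : Perm ι | g ∘ σ = f} = #{σ : Perm ι | f ∘ σ = f} := by
  subst hπ
  refine card_nbij' (π⁻¹ * ·) (π * ·) (fun σ hσ => ?_) (fun σ hσ => ?_) (fun σ _ => by simp)
    (fun σ _ => by simp)
  all_goals
    simp only [coe_filter, mem_univ, true_and, Set.mem_ofPred_eq] at hσ ⊢
    ext i
    simpa using congrFun hσ i

variable {α : Type*} [Fintype α] [DecidableEq α]

-- Instance search does not see `instDecidableRelSameCycle` through `SameCycle.setoid`; this makes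
-- the quotient by the cycles of `σ` a `Fintype` with decidable equality.
instance (σ : Perm α) : DecidableRel (SameCycle.setoid σ).r :=
  fun a b => inferInstanceAs (Decidable (σ.SameCycle a b))

theorem sum_comp_eq_self_eq_sum_comp_mk {β M : Type*} [Fintype β] [DecidableEq β]
    [AddCommMonoid M] (σ : Perm α) (F : (α → β) → M) :
    ∑ f with f ∘ σ = f, F f = ∑ g : Quotient (SameCycle.setoid σ) → β, F (g ∘ Quotient.mk _) := by
  classical
  rw [sum_subtype _ fun f => (mem_filter_univ _).trans sameCycle_setoid_le_ker_iff.symm]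
  exact Fintype.sum_equiv (Setoid.liftEquiv _) _ _ fun _ => rfl

section CycleClasses

variable {σ : Perm α}

theorem filter_mk_eq_of_out_mem_support {q : Quotient (SameCycle.setoid σ)}
    (hq : q.out ∈ σ.support) :
    ({a | Quotient.mk _ a = q} : Finset α) = (σ.cycleOf q.out).support := by
  ext a
  rw [mem_filter_univ, Quotient.mk_eq_iff_out, mem_support_cycleOf_iff, sameCycle_comm]
  exact (and_iff_left hq).symm

theorem filter_mk_eq_of_out_notMem_support {q : Quotient (SameCycle.setoid σ)}
    (hq : q.out ∉ σ.support) : ({a | Quotient.mk _ a = q} : Finset α) = {q.out} := by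
  ext a
  rw [mem_filter_univ, Quotient.mk_eq_iff_out, mem_singleton]
  exact ⟨fun h => SameCycle.eq_of_right h (notMem_support.1 hq), fun h => h ▸ SameCycle.rfl⟩

theorem map_card_filter_mk_of_out_mem_support :
    (univ.filter fun q : Quotient (SameCycle.setoid σ) => q.out ∈ σ.support).val.map
      (fun q => #{a | Quotient.mk _ a = q}) = σ.cycleType := by
  have hinj : Set.InjOn (fun q : Quotient (SameCycle.setoid σ) => σ.cycleOf q.out)
      ↑(univ.filter fun q : Quotient (SameCycle.setoid σ) => q.out ∈ σ.support) := by
    intro q hq q' _ h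
    have h : σ.cycleOf q.out = σ.cycleOf q'.out := h
    have hq : q.out ∈ σ.support := by simpa using hq
    have h' : q.out ∈ (σ.cycleOf q'.out).support :=
      h ▸ mem_support_cycleOf_iff.2 ⟨SameCycle.rfl, hq⟩
    exact Quotient.out_equiv_out.1 (mem_support_cycleOf_iff.1 h').1.symm
  have himage : (univ.filter fun q : Quotient (SameCycle.setoid σ) => q.out ∈ σ.support).image
      (fun q => σ.cycleOf q.out) = σ.cycleFactorsFinset := by
    ext c
    simp only [mem_image, mem_filter_univ]
    refine ⟨fun ⟨q, hq, hc⟩ => hc ▸ cycleOf_mem_cycleFactorsFinset_iff.2 hq, fun hc => ?_⟩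
    obtain ⟨a, ha⟩ := (mem_cycleFactorsFinset_iff.1 hc).1.nonempty_support
    have hout : σ.SameCycle (Quotient.mk _ a).out a := Quotient.mk_out (s := SameCycle.setoid σ) a
    refine ⟨Quotient.mk _ a, hout.mem_support_iff.2 (mem_cycleFactorsFinset_support_le hc ha), ?_⟩
    rw [hout.cycleOf_eq, cycle_is_cycleOf ha hc]
  rw [cycleType_def, ← himage, image_val_of_injOn hinj, Multiset.map_map]
  refine Multiset.map_congr rfl fun q hq => ?_
  rw [Function.comp_apply, Function.comp_apply,
    filter_mk_eq_of_out_mem_support ((mem_filter_univ _).1 (by simpa using hq))]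

theorem map_card_filter_mk_of_out_notMem_support :
    (univ.filter fun q : Quotient (SameCycle.setoid σ) => q.out ∉ σ.support).val.map
      (fun q => #{a | Quotient.mk _ a = q}) =
      Multiset.replicate (Fintype.card α - #σ.support) 1 := by
  refine Multiset.eq_replicate.2 ⟨?_, fun n hn => ?_⟩
  · rw [Multiset.card_map, card_val, ← card_compl]
    have hout : ∀ a ∈ (↑σ.supportᶜ : Set α), (Quotient.mk (SameCycle.setoid σ) a).out = a :=
      fun a ha => SameCycle.eq_of_right (Quotient.mk_out (s := SameCycle.setoid σ) a)
        (notMem_support.1 (mem_compl.1 ha))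
    refine card_nbij' (·.out) (Quotient.mk _) (fun q hq => by simpa using hq)
      (fun a ha => ?_) (fun q _ => q.out_eq) hout
    simpa [hout a ha] using ha
  · obtain ⟨q, hq, rfl⟩ := Multiset.mem_map.1 hn
    rw [filter_mk_eq_of_out_notMem_support (by simpa using hq), card_singleton]

end CycleClasses

theorem map_card_filter_mk_eq_parts_partition (σ : Perm α) :
    (univ : Finset (Quotient (SameCycle.setoid σ))).val.map
      (fun q => #{a | Quotient.mk _ a = q}) = σ.partition.parts := by
  rw [parts_partition, ← map_card_filter_mk_of_out_mem_support,
    ← map_card_filter_mk_of_out_notMem_support, ← Multiset.map_add, filter_val, filter_val,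
    Multiset.filter_add_not]

theorem prod_map_parts_partition {M : Type*} [CommMonoid M] (σ : Perm α) (g : ℕ → M) :
    (σ.partition.parts.map g).prod =
      (σ.cycleType.map g).prod * g 1 ^ (Fintype.card α - σ.cycleType.sum) := by
  rw [parts_partition, Multiset.map_add, Multiset.prod_add, Multiset.map_replicate,
    Multiset.prod_replicate, sum_cycleType]

theorem prod_map_psum_parts_partition (τ R : Type*) [Fintype τ] [DecidableEq τ] [CommSemiring R]
    (σ : Perm α) :
    (σ.partition.parts.map (psum τ R)).prod =
      ∑ f with f ∘ σ = f, ∏ a, (X (f a) : MvPolynomial τ R) := by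
  rw [sum_comp_eq_self_eq_sum_comp_mk, ← map_card_filter_mk_eq_parts_partition, Multiset.map_map,
    prod_map_val]
  exact (sum_prod_X_comp_eq_prod_psum _).symm

end Equiv.Perm

namespace Sym

variable {β : Type*} {n : ℕ}

def ofFn (f : Fin n → β) : Sym β n := ⟨List.ofFn f, by rw [Multiset.coe_card, List.length_ofFn]⟩

@[simp] theorem coe_ofFn (f : Fin n → β) : (ofFn f : Multiset β) = List.ofFn f := rfl

theorem ofFn_comp_perm (f : Fin n → β) (σ : Perm (Fin n)) : ofFn (f ∘ σ) = ofFn f :=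
  Subtype.ext (Multiset.coe_eq_coe.2 (σ.ofFn_comp_perm f))

theorem ofFn_surjective : Function.Surjective (ofFn : (Fin n → β) → Sym β n) := by
  rintro ⟨⟨l⟩, hl : l.length = n⟩
  exact ⟨fun i => l.get (i.cast hl.symm),
    Subtype.ext (congrArg ((↑) : List β → Multiset β)
      ((List.ofFn_congr hl l.get).symm.trans (List.ofFn_get l)))⟩

theorem prod_map_ofFn {M : Type*} [CommMonoid M] (w : β → M) (f : Fin n → β) :
    ((ofFn f : Multiset β).map w).prod = ∏ i, w (f i) := by
  rw [coe_ofFn, Multiset.map_coe, Multiset.prod_coe, List.map_ofFn, List.prod_ofFn]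
  rfl

theorem exists_comp_eq_of_ofFn_eq {f g : Fin n → β} (h : ofFn f = ofFn g) :
    ∃ π : Perm (Fin n), g ∘ π = f :=
  exists_comp_eq_of_map_univ_eq
    (by rw [Fin.univ_val_map, Fin.univ_val_map, ← coe_ofFn, ← coe_ofFn, h])

variable [Fintype β] [DecidableEq β]

theorem sum_card_stabilizer_fiber_ofFn (s : Sym β n) :
    ∑ f with ofFn f = s, #{σ : Perm (Fin n) | f ∘ σ = f} = n ! := by
  obtain ⟨g, rfl⟩ := ofFn_surjective s
  calc ∑ f with ofFn f = ofFn g, #{σ : Perm (Fin n) | f ∘ σ = f}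
      = ∑ f with ofFn f = ofFn g, #{σ : Perm (Fin n) | g ∘ σ = f} := by
        refine sum_congr rfl fun f hf => ?_
        obtain ⟨π, hπ⟩ := exists_comp_eq_of_ofFn_eq (mem_filter.1 hf).2
        exact (card_filter_comp_eq_of_comp_eq hπ).symm
    _ = #(univ : Finset (Perm (Fin n))) :=
        (card_eq_sum_card_fiberwise fun σ _ => by simp [ofFn_comp_perm]).symm
    _ = n ! := by rw [Finset.card_univ, Fintype.card_perm, Fintype.card_fin]

theorem sum_perm_sum_comp_eq_self_ofFn {M : Type*} [AddCommMonoid M] (w : Sym β n → M) :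
    ∑ σ : Perm (Fin n), ∑ f with f ∘ σ = f, w (ofFn f) = n ! • ∑ s, w s := by
  calc ∑ σ : Perm (Fin n), ∑ f with f ∘ σ = f, w (ofFn f)
      = ∑ f : Fin n → β, #{σ : Perm (Fin n) | f ∘ σ = f} • w (ofFn f) := by
        refine (sum_comm' fun σ f => ?_).trans (sum_congr rfl fun f _ => sum_const _)
        simp
    _ = ∑ s, ∑ f with ofFn f = s, #{σ : Perm (Fin n) | f ∘ σ = f} • w s := by
        rw [← sum_fiberwise _ ofFn]
        refine sum_congr rfl fun s _ => sum_congr rfl fun f hf => ?_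
        rw [(mem_filter.1 hf).2]
    _ = n ! • ∑ s, w s := by
        simp only [← sum_smul, sum_card_stabilizer_fiber_ofFn, smul_sum]

end Sym

/-- The Frobenius characteristic of the trivial representation:
`Σ_{σ ∈ Sₙ} p_{λ(σ)} = n!·hₙ`, where `λ(σ)` is the full cycle type of `σ` (all cycles,
including fixed points, of which there are `n − σ.cycleType.sum`), `p_k` is the `k`-th
power sum and `hₙ` the complete homogeneous symmetric polynomial. -/
theorem sum_powerSum_cycleType (n : ℕ) (τ : Type*) [Fintype τ] [DecidableEq τ] :
    ∑ σ : Equiv.Perm (Fin n),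
        (σ.cycleType.map fun k => MvPolynomial.psum τ ℚ k).prod *
          MvPolynomial.psum τ ℚ 1 ^ (n - σ.cycleType.sum) =
      (n.factorial : MvPolynomial τ ℚ) * MvPolynomial.hsymm τ ℚ n := by
  calc _ = ∑ σ : Perm (Fin n), ∑ f : Fin n → τ with f ∘ σ = f,
          ((Sym.ofFn f : Multiset τ).map (X : τ → MvPolynomial τ ℚ)).prod := by
        refine sum_congr rfl fun σ _ => ?_
        simp only [Sym.prod_map_ofFn]
        rw [← prod_map_psum_parts_partition, prod_map_parts_partition, Fintype.card_fin]
    _ = n ! • hsymm τ ℚ n := by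
        rw [hsymm]
        exact Sym.sum_perm_sum_comp_eq_self_ofFn fun s : Sym τ n => ((s : Multiset τ).map X).prod
    _ = _ := nsmul_eq_mul _ _
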